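/- (Triangle inequality for the rotation angle) For all P, Q ∈ SO(3), the rotation angle of the product is at most the sum of the rotation angles: arccos((tr(P Q) − 1)/2) ≤ arccos((tr P − 1)/2) + arccos((tr Q − 1)/2). Equivalently, for attitude errors R_e^i, R_e^j ∈ SO(3), ‖Log((R_e^j)ᵀ R_e^i)‖_F ≤ ‖Log(R_e^i)‖_F + ‖Log(R_e^j)‖_F whenever the logarithms are defined. -/

import Mathlib

/-!
For `R ∈ SO(3)` the symmetric matrix `M = R + Rᵀ - (tr R - 1) I` satisfies `M² = (3 - tr R) M`
(Cayley–Hamilton), so it is singular and positive semidefinite. Since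
`⟪w, M w⟫ = 2 ⟪w, R w⟫ - (tr R - 1) ‖w‖²`, this says that `θ(R)` is the largest angle between a
vector `w` and its image `R w`, attained on the kernel of `M`. Taking such a `w` for `P Q`,
`θ(P Q) = ∠(w, P Q w) ≤ ∠(w, Q w) + ∠(Q w, P Q w) ≤ θ(Q) + θ(P)`.
The logarithmic form follows from `‖Log R‖_F = √2 θ(R)` and `θ(Rᵀ) = θ(R)`.
-/

open Matrix Real

/-- `SO3 R` means `R` is a rotation matrix: `Rᵀ R = I` and `det R = 1`. -/
def SO3 (R : Matrix (Fin 3) (Fin 3) ℝ) : Prop := Rᵀ * R = 1 ∧ R.det = 1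

/-- The rotation angle `θ(R) = arccos((tr R − 1)/2)` of a rotation matrix. -/
noncomputable def rotAngle (R : Matrix (Fin 3) (Fin 3) ℝ) : ℝ :=
  Real.arccos ((R.trace - 1) / 2)

/-- The principal logarithm on SO(3). -/
noncomputable def SO3Log (R : Matrix (Fin 3) (Fin 3) ℝ) : Matrix (Fin 3) (Fin 3) ℝ :=
  if R = 1 then 0 else (rotAngle R / (2 * Real.sin (rotAngle R))) • (R - Rᵀ)

/-- The Frobenius norm `‖A‖_F = √(tr(Aᵀ A))`. -/
noncomputable def fnorm (A : Matrix (Fin 3) (Fin 3) ℝ) : ℝ :=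
  Real.sqrt ((Aᵀ * A).trace)

open InnerProductGeometry

theorem Matrix.cayley_hamilton_fin_three {K : Type*} [CommRing K] (A : Matrix (Fin 3) (Fin 3) K) :
    A * A * A - A.trace • (A * A) + (adjugate A).trace • A - A.det • (1 : Matrix (Fin 3) (Fin 3) K)
      = 0 := by
  ext i j
  fin_cases i <;> fin_cases j <;>
    simp [Matrix.mul_apply, Fin.sum_univ_three, Matrix.trace_fin_three, Matrix.det_fin_three,
      Matrix.adjugate_fin_three] <;> ring

section Orthogonal

variable {n : Type*} [Fintype n] [DecidableEq n] {R : Matrix n n ℝ}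

theorem Matrix.mulVec_dotProduct_mulVec_of_transpose_mul_self (hR : Rᵀ * R = 1) (v : n → ℝ) :
    (R *ᵥ v) ⬝ᵥ (R *ᵥ v) = v ⬝ᵥ v := by
  rw [dotProduct_mulVec, ← mulVec_transpose, mulVec_mulVec, hR, one_mulVec]

theorem Matrix.norm_toLp_mulVec_of_transpose_mul_self (hR : Rᵀ * R = 1) (v : n → ℝ) :
    ‖(WithLp.toLp 2 (R *ᵥ v) : EuclideanSpace ℝ n)‖
      = ‖(WithLp.toLp 2 v : EuclideanSpace ℝ n)‖ := by
  rw [← sq_eq_sq₀ (norm_nonneg _) (norm_nonneg _), ← real_inner_self_eq_norm_sq,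
    ← real_inner_self_eq_norm_sq]
  simpa only [EuclideanSpace.inner_toLp_toLp, star_trivial] using
    mulVec_dotProduct_mulVec_of_transpose_mul_self hR v

theorem Matrix.angle_toLp_mulVec_of_transpose_mul_self (hR : Rᵀ * R = 1) (v : n → ℝ) :
    angle (WithLp.toLp 2 v : EuclideanSpace ℝ n) (WithLp.toLp 2 (R *ᵥ v))
      = arccos ((v ⬝ᵥ R *ᵥ v) / (v ⬝ᵥ v)) := by
  rw [angle, norm_toLp_mulVec_of_transpose_mul_self hR, ← real_inner_self_eq_norm_mul_norm,
    EuclideanSpace.inner_toLp_toLp, EuclideanSpace.inner_toLp_toLp, star_trivial,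
    dotProduct_comm (R *ᵥ v)]

theorem Matrix.abs_dotProduct_mulVec_le_of_transpose_mul_self (hR : Rᵀ * R = 1) (v : n → ℝ) :
    |v ⬝ᵥ R *ᵥ v| ≤ v ⬝ᵥ v := by
  have := abs_real_inner_le_norm (WithLp.toLp 2 v : EuclideanSpace ℝ n) (WithLp.toLp 2 (R *ᵥ v))
  rwa [norm_toLp_mulVec_of_transpose_mul_self hR, ← real_inner_self_eq_norm_mul_norm,
    EuclideanSpace.inner_toLp_toLp, EuclideanSpace.inner_toLp_toLp, star_trivial,
    dotProduct_comm (R *ᵥ v)] at this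

end Orthogonal

-- For a rotation by `θ` about a unit axis `n` this is `2 (1 - cos θ) n nᵀ`.
noncomputable def rotAxisMatrix (R : Matrix (Fin 3) (Fin 3) ℝ) : Matrix (Fin 3) (Fin 3) ℝ :=
  R + Rᵀ - (R.trace - 1) • 1

theorem rotAxisMatrix_transpose (R : Matrix (Fin 3) (Fin 3) ℝ) :
    (rotAxisMatrix R)ᵀ = rotAxisMatrix R := by
  simp [rotAxisMatrix, add_comm]

theorem dotProduct_rotAxisMatrix_mulVec (R : Matrix (Fin 3) (Fin 3) ℝ) (w : Fin 3 → ℝ) :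
    w ⬝ᵥ rotAxisMatrix R *ᵥ w = 2 * (w ⬝ᵥ R *ᵥ w) - (R.trace - 1) * (w ⬝ᵥ w) := by
  rw [rotAxisMatrix, sub_mulVec, add_mulVec, smul_mulVec, one_mulVec, dotProduct_sub,
    dotProduct_add, dotProduct_transpose_mulVec, dotProduct_smul, smul_eq_mul]
  ring

theorem rotAngle_transpose (R : Matrix (Fin 3) (Fin 3) ℝ) : rotAngle Rᵀ = rotAngle R := by
  rw [rotAngle, rotAngle, trace_transpose]

theorem SO3Log_eq_smul_sub_transpose (R : Matrix (Fin 3) (Fin 3) ℝ) :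
    SO3Log R = (rotAngle R / (2 * sin (rotAngle R))) • (R - Rᵀ) := by
  unfold SO3Log
  split_ifs with h1
  · simp [h1]
  · rfl

theorem fnorm_smul (c : ℝ) (A : Matrix (Fin 3) (Fin 3) ℝ) : fnorm (c • A) = |c| * fnorm A := by
  rw [fnorm, fnorm, transpose_smul, smul_mul_smul_comm, trace_smul, smul_eq_mul, ← sq,
    sqrt_mul (sq_nonneg c), sqrt_sq_eq_abs]

namespace SO3

variable {R P Q : Matrix (Fin 3) (Fin 3) ℝ}

theorem mul_transpose (h : SO3 R) : R * Rᵀ = 1 :=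
  mul_eq_one_comm.mpr h.1

theorem transpose (h : SO3 R) : SO3 Rᵀ :=
  ⟨by rw [transpose_transpose, h.mul_transpose], by rw [det_transpose, h.2]⟩

theorem mul (hP : SO3 P) (hQ : SO3 Q) : SO3 (P * Q) := by
  refine ⟨?_, by rw [det_mul, hP.2, hQ.2, one_mul]⟩
  rw [transpose_mul, mul_assoc, ← mul_assoc Pᵀ, hP.1, one_mul, hQ.1]

theorem adjugate_eq (h : SO3 R) : adjugate R = Rᵀ := by
  rw [← Matrix.mul_one (adjugate R), ← h.mul_transpose, ← mul_assoc, adjugate_mul, h.2, one_smul,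
    one_mul]

theorem mul_self (h : SO3 R) : R * R = R.trace • R - R.trace • 1 + Rᵀ := by
  have hCH := congrArg (Rᵀ * ·) (cayley_hamilton_fin_three R)
  simp only [h.adjugate_eq, trace_transpose, h.2, one_smul, Matrix.mul_sub, Matrix.mul_add,
    mul_smul_comm, ← mul_assoc, h.1, one_mul, mul_one, Matrix.mul_zero] at hCH
  linear_combination (norm := abel) hCH

theorem rotAxisMatrix_mul_self (h : SO3 R) :
    rotAxisMatrix R * rotAxisMatrix R = (3 - R.trace) • rotAxisMatrix R := by
  have hT := h.transpose.mul_self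
  rw [transpose_transpose, trace_transpose] at hT
  simp only [rotAxisMatrix, Matrix.add_mul, Matrix.sub_mul, Matrix.mul_add, Matrix.mul_sub,
    smul_mul_assoc, mul_smul_comm, one_mul, mul_one, h.mul_self, hT, h.1, h.mul_transpose,
    smul_smul, smul_sub, smul_add]
  module

-- An invertible `M` with `M * M = c • M` is `c • 1`; taking traces forces `c = 0`.
theorem exists_rotAxisMatrix_mulVec_eq_zero (h : SO3 R) :
    ∃ w ≠ 0, rotAxisMatrix R *ᵥ w = 0 := by
  set M := rotAxisMatrix R
  refine exists_mulVec_eq_zero_iff.mpr (by_contra fun hdet => ?_)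
  have hM : M = (3 - R.trace) • 1 := by
    have hu := isUnit_iff_ne_zero.mpr hdet
    calc M = M⁻¹ * (M * M) := by rw [← mul_assoc, nonsing_inv_mul M hu, one_mul]
      _ = (3 - R.trace) • 1 := by rw [h.rotAxisMatrix_mul_self, mul_smul_comm, nonsing_inv_mul M hu]
  have htr := congrArg trace hM
  simp only [M, rotAxisMatrix, trace_add, trace_sub, trace_smul, trace_transpose, trace_one,
    Fintype.card_fin, Nat.cast_ofNat, smul_eq_mul] at htr
  have ht : R.trace = 3 := by linarith
  rw [ht, sub_self, zero_smul] at hM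
  simp [hM] at hdet

theorem exists_two_mul_dotProduct_mulVec_eq (h : SO3 R) :
    ∃ w ≠ 0, 2 * (w ⬝ᵥ R *ᵥ w) = (R.trace - 1) * (w ⬝ᵥ w) := by
  obtain ⟨w, hw, hMw⟩ := h.exists_rotAxisMatrix_mulVec_eq_zero
  refine ⟨w, hw, ?_⟩
  have := dotProduct_rotAxisMatrix_mulVec R w
  rw [hMw, dotProduct_zero] at this
  linarith

theorem abs_trace_sub_one_le_two (h : SO3 R) : |R.trace - 1| ≤ 2 := by
  obtain ⟨w, hw, hext⟩ := h.exists_two_mul_dotProduct_mulVec_eq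
  have hpos : 0 < w ⬝ᵥ w := by simpa using dotProduct_star_self_pos_iff.mpr hw
  have hCS := abs_dotProduct_mulVec_le_of_transpose_mul_self h.1 w
  rw [← mul_le_mul_iff_left₀ hpos, ← abs_of_pos hpos, ← abs_mul, ← hext, abs_mul, abs_two,
    abs_of_pos hpos]
  linarith

theorem trace_sub_one_mul_le (h : SO3 R) (w : Fin 3 → ℝ) :
    (R.trace - 1) * (w ⬝ᵥ w) ≤ 2 * (w ⬝ᵥ R *ᵥ w) := by
  set M := rotAxisMatrix R
  have hsq : (M *ᵥ w) ⬝ᵥ (M *ᵥ w) = (3 - R.trace) * (w ⬝ᵥ M *ᵥ w) := by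
    rw [dotProduct_mulVec, ← mulVec_transpose, mulVec_mulVec, rotAxisMatrix_transpose,
      h.rotAxisMatrix_mul_self, smul_mulVec, smul_dotProduct, dotProduct_comm, smul_eq_mul]
  have hnonneg : 0 ≤ w ⬝ᵥ M *ᵥ w := by
    rcases (abs_le.mp h.abs_trace_sub_one_le_two).2.lt_or_eq with ht | ht
    · have : 0 ≤ (M *ᵥ w) ⬝ᵥ (M *ᵥ w) := by simpa using dotProduct_star_self_nonneg (M *ᵥ w)
      nlinarith
    · rw [show R.trace = 3 by linarith, sub_self, zero_mul, dotProduct_self_eq_zero] at hsq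
      rw [hsq, dotProduct_zero]
  linarith [dotProduct_rotAxisMatrix_mulVec R w]

theorem angle_le_rotAngle (h : SO3 R) {w : Fin 3 → ℝ} (hw : w ≠ 0) :
    angle (WithLp.toLp 2 w : EuclideanSpace ℝ (Fin 3)) (WithLp.toLp 2 (R *ᵥ w)) ≤ rotAngle R := by
  have hpos : 0 < w ⬝ᵥ w := by simpa using dotProduct_star_self_pos_iff.mpr hw
  rw [angle_toLp_mulVec_of_transpose_mul_self h.1, rotAngle]
  refine arccos_le_arccos ((div_le_div_iff₀ two_pos hpos).mpr ?_)
  linarith [h.trace_sub_one_mul_le w]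

theorem exists_angle_eq_rotAngle (h : SO3 R) :
    ∃ w ≠ 0, angle (WithLp.toLp 2 w : EuclideanSpace ℝ (Fin 3)) (WithLp.toLp 2 (R *ᵥ w))
      = rotAngle R := by
  obtain ⟨w, hw, hext⟩ := h.exists_two_mul_dotProduct_mulVec_eq
  have hpos : 0 < w ⬝ᵥ w := by simpa using dotProduct_star_self_pos_iff.mpr hw
  refine ⟨w, hw, ?_⟩
  rw [angle_toLp_mulVec_of_transpose_mul_self h.1, rotAngle,
    (div_eq_div_iff hpos.ne' two_ne_zero).mpr (by linarith : _ = (R.trace - 1) * _)]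

theorem rotAngle_mul_le (hP : SO3 P) (hQ : SO3 Q) :
    rotAngle (P * Q) ≤ rotAngle P + rotAngle Q := by
  obtain ⟨w, hw, hθ⟩ := (hP.mul hQ).exists_angle_eq_rotAngle
  have hQw : Q *ᵥ w ≠ 0 := fun h0 => hw (by
    simpa [h0] using (mulVec_dotProduct_mulVec_of_transpose_mul_self hQ.1 w).symm)
  rw [← mulVec_mulVec] at hθ
  calc rotAngle (P * Q) = angle (WithLp.toLp 2 w : EuclideanSpace ℝ (Fin 3))
        (WithLp.toLp 2 (P *ᵥ Q *ᵥ w)) := hθ.symm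
    _ ≤ angle (WithLp.toLp 2 w : EuclideanSpace ℝ (Fin 3)) (WithLp.toLp 2 (Q *ᵥ w))
        + angle (WithLp.toLp 2 (Q *ᵥ w) : EuclideanSpace ℝ (Fin 3))
          (WithLp.toLp 2 (P *ᵥ Q *ᵥ w)) := angle_le_angle_add_angle _ _ _
    _ ≤ rotAngle Q + rotAngle P := add_le_add (hQ.angle_le_rotAngle hw) (hP.angle_le_rotAngle hQw)
    _ = rotAngle P + rotAngle Q := add_comm _ _

theorem trace_sub_transpose_transpose_mul_self (h : SO3 R) :
    ((R - Rᵀ)ᵀ * (R - Rᵀ)).trace = 8 * (1 - ((R.trace - 1) / 2) ^ 2) := by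
  have hsq : (R * R).trace = R.trace ^ 2 - 2 * R.trace := by
    rw [h.mul_self, trace_add, trace_sub, trace_smul, trace_smul, trace_one, trace_transpose]
    simp only [Fintype.card_fin, Nat.cast_ofNat, smul_eq_mul]
    ring
  have hsqT : (Rᵀ * Rᵀ).trace = (R * R).trace := by rw [← transpose_mul, trace_transpose]
  rw [transpose_sub, transpose_transpose, Matrix.sub_mul, Matrix.mul_sub, Matrix.mul_sub,
    h.1, h.mul_transpose, trace_sub, trace_sub, trace_sub, hsqT, hsq, trace_one]
  simp only [Fintype.card_fin, Nat.cast_ofNat]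
  ring

theorem fnorm_sub_transpose (h : SO3 R) : fnorm (R - Rᵀ) = 2 * √2 * sin (rotAngle R) := by
  rw [fnorm, h.trace_sub_transpose_transpose_mul_self, rotAngle, sin_arccos,
    show (8 : ℝ) = 2 ^ 2 * 2 by norm_num, mul_assoc, sqrt_mul (by norm_num),
    sqrt_mul (by norm_num), sqrt_sq zero_le_two, mul_assoc]

theorem fnorm_SO3Log (h : SO3 R) (ht : R.trace ≠ -1) : fnorm (SO3Log R) = √2 * rotAngle R := by
  have hθ0 : 0 ≤ rotAngle R := arccos_nonneg _
  have hθπ : rotAngle R < π := by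
    refine arccos_lt_pi.mpr ?_
    have := (abs_le.mp h.abs_trace_sub_one_le_two).1
    have : -1 < R.trace := lt_of_le_of_ne (by linarith) ht.symm
    linarith
  have hsin : 0 ≤ sin (rotAngle R) := sin_nonneg_of_nonneg_of_le_pi hθ0 hθπ.le
  rw [SO3Log_eq_smul_sub_transpose, fnorm_smul, h.fnorm_sub_transpose,
    abs_of_nonneg (by positivity)]
  rcases hsin.eq_or_lt with hs | hs
  · have : rotAngle R = 0 := (sin_eq_zero_iff_of_lt_of_lt (by linarith [pi_pos]) hθπ).mp hs.symm
    simp [this]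
  · field_simp

end SO3

/-- Triangle inequality for the rotation angle: for all `P, Q ∈ SO(3)`,
`θ(P Q) ≤ θ(P) + θ(Q)`; equivalently, for attitude errors `R_e^i, R_e^j ∈ SO(3)`,
`‖Log((R_e^j)ᵀ R_e^i)‖_F ≤ ‖Log(R_e^i)‖_F + ‖Log(R_e^j)‖_F` whenever the
logarithms are defined. -/
theorem stmt15 :
    (∀ P Q : Matrix (Fin 3) (Fin 3) ℝ, SO3 P → SO3 Q →
      rotAngle (P * Q) ≤ rotAngle P + rotAngle Q) ∧
    (∀ Rei Rej : Matrix (Fin 3) (Fin 3) ℝ, SO3 Rei → SO3 Rej →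
      Rei.trace ≠ -1 → Rej.trace ≠ -1 → (Rejᵀ * Rei).trace ≠ -1 →
      fnorm (SO3Log (Rejᵀ * Rei)) ≤ fnorm (SO3Log Rei) + fnorm (SO3Log Rej)) := by
  refine ⟨fun P Q hP hQ => hP.rotAngle_mul_le hQ, fun Rei Rej hi hj hti htj htij => ?_⟩
  rw [(hj.transpose.mul hi).fnorm_SO3Log htij, hi.fnorm_SO3Log hti, hj.fnorm_SO3Log htj, ← mul_add]
  gcongr
  calc rotAngle (Rejᵀ * Rei) ≤ rotAngle Rejᵀ + rotAngle Rei := hj.transpose.rotAngle_mul_le hi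
    _ = rotAngle Rei + rotAngle Rej := by rw [rotAngle_transpose, add_comm]
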